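/- In the binary consensus game structure G_3, if agent a's strategy is common knowledge in I (wa ∈ I for every nonempty alternating word w over {a,b}), then G_3, (χ, I, ρ) ⊨ C_G p, where G = {a,b}, χ(a)(v_1) = α, and ρ = v_1 α v_2. Moreover, common knowledge of a's strategy is preserved along every accessibility step from (χ, I, ρ) by agents in G. -/

import Mathlib

namespace KOS

/-- A word over the agents: length ≥ 2 and no adjacent repetitions. -/
def IsWord {Ag : Type} (w : List Ag) : Prop := 2 ≤ w.length ∧ w.Chain' (· ≠ ·)

/-- An information perspective is a set of words over `Ag` of length ≥ 2
without adjacent repetitions. -/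
def InfPersp {Ag : Type} (I : Set (List Ag)) : Prop := ∀ w ∈ I, IsWord w

/-- The perspective shift `I[a]`. -/
def shift {Ag : Type} (I : Set (List Ag)) (a : Ag) : Set (List Ag) :=
  {w | IsWord w ∧ a :: w ∈ I} ∪ {w | w ∈ I ∧ ∃ w', w = a :: w'}

/-- `I_a`: the agents whose strategies `a` is informed about (including `a`). -/
def Ia {Ag : Type} (I : Set (List Ag)) (a : Ag) : Set Ag :=
  {b | [a, b] ∈ I} ∪ {a}

/-- A truthful information perspective: closed under suffixes. -/
def Truthful {Ag : Type} (I : Set (List Ag)) : Prop :=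
  ∀ (a : Ag) (w : List Ag), IsWord w → a :: w ∈ I → w ∈ I

/-- Concurrent game structure. -/
structure CGS (PV Ag Ac V : Type) where
  E : V → (Ag → Ac) → V
  label : V → Set PV
  simV : Ag → V → V → Prop
  simAc : Ag → Ac → Ac → Prop
  eqvV : ∀ a, Equivalence (simV a)
  eqvAc : ∀ a, Equivalence (simAc a)

/-- Histories: alternating sequences of positions and joint actions. -/
inductive Hist (Ag Ac V : Type) where
  | init : V → Hist Ag Ac V
  | step : Hist Ag Ac V → (Ag → Ac) → V → Hist Ag Ac V

namespace Hist
def last {Ag Ac V : Type} : Hist Ag Ac V → V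
  | init v => v
  | step _ _ v => v
end Hist

variable {PV Ag Ac V : Type}

/-- Validity of a history w.r.t. the transition function. -/
def CGS.Valid (G : CGS PV Ag Ac V) : Hist Ag Ac V → Prop
  | .init _ => True
  | .step ρ α v => G.Valid ρ ∧ v = G.E ρ.last α

/-- Indistinguishability of histories for agent `a` (synchronous perfect recall). -/
def CGS.simH (G : CGS PV Ag Ac V) (a : Ag) : Hist Ag Ac V → Hist Ag Ac V → Prop
  | .init v, .init v' => G.simV a v v'
  | .step ρ α v, .step ρ' α' v' =>
      G.simH a ρ ρ' ∧ (∀ b, G.simAc a (α b) (α' b)) ∧ G.simV a v v'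
  | _, _ => False

/-- A strategy maps histories to actions. -/
def Strategy (Ag Ac V : Type) := Hist Ag Ac V → Ac

/-- An assignment maps agents to strategies. -/
def Assignment (Ag Ac V : Type) := Ag → Strategy Ag Ac V

/-- A history is consistent with an assignment for a set `X` of agents. -/
def Consistent (χ : Assignment Ag Ac V) (X : Set Ag) : Hist Ag Ac V → Prop
  | .init _ => True
  | .step ρ α _ => Consistent χ X ρ ∧ ∀ b ∈ X, α b = χ b ρ

/-- Indistinguishability of assignments for agent `a` under perspective `I`. -/
def assignSim (I : Set (List Ag)) (a : Ag) (χ χ' : Assignment Ag Ac V) : Prop :=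
  ∀ b ∈ Ia I a, χ b = χ' b

/-- A state: assignment, information perspective, history. -/
structure State (Ag Ac V : Type) where
  χ : Assignment Ag Ac V
  I : Set (List Ag)
  ρ : Hist Ag Ac V

/-- `a`-consistency of a state. -/
def State.aCons (Z : State Ag Ac V) (a : Ag) : Prop := Consistent Z.χ (Ia Z.I a) Z.ρ

/-- Accessibility of states for agent `a`. -/
def CGS.Acc (G : CGS PV Ag Ac V) (a : Ag) (Z Z' : State Ag Ac V) : Prop :=
  InfPersp Z.I ∧ InfPersp Z'.I ∧ G.Valid Z.ρ ∧ G.Valid Z'.ρ ∧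
  assignSim Z.I a Z.χ Z'.χ ∧ shift Z.I a ⊆ Z'.I ∧ G.simH a Z.ρ Z'.ρ ∧
  Z.aCons a ∧ Z'.aCons a

/-- One-step continuation of a history under an assignment. -/
def CGS.nextH (G : CGS PV Ag Ac V) (χ : Assignment Ag Ac V) (ρ : Hist Ag Ac V) :
    Hist Ag Ac V :=
  .step ρ (fun b => χ b ρ) (G.E ρ.last (fun b => χ b ρ))

/-- Formulas of the language `L^C`. -/
inductive Form (PV Ag : Type) where
  | atom : PV → Form PV Ag
  | bot : Form PV Ag
  | imp : Form PV Ag → Form PV Ag → Form PV Ag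
  | know : Ag → Form PV Ag → Form PV Ag
  | common : Set Ag → Form PV Ag → Form PV Ag
  | next : Form PV Ag → Form PV Ag

def Form.neg {PV Ag : Type} (φ : Form PV Ag) : Form PV Ag := .imp φ .bot

/-- Truth of a formula at a state in a concurrent game structure. -/
def CGS.Truth (G : CGS PV Ag Ac V) : Form PV Ag → State Ag Ac V → Prop
  | .atom p, Z => p ∈ G.label Z.ρ.last
  | .bot, _ => False
  | .imp φ ψ, Z => G.Truth φ Z → G.Truth ψ Z
  | .know a φ, Z => ∀ Z', G.Acc a Z Z' → G.Truth φ Z'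
  | .common S φ, Z =>
      ∀ Z', Relation.TransGen (fun X Y => ∃ x ∈ S, G.Acc x X Y) Z Z' → G.Truth φ Z'
  | .next φ, Z => G.Truth φ ⟨Z.χ, Z.I, G.nextH Z.χ Z.ρ⟩

/-- K-depth of a formula. -/
def kd {PV Ag : Type} : Form PV Ag → ℕ
  | .atom _ => 0
  | .bot => 0
  | .imp φ ψ => max (kd φ) (kd ψ)
  | .know _ φ => kd φ + 1
  | .common _ φ => kd φ + 1
  | .next φ => kd φ

/-- `L`-formulas: no common knowledge operator. -/
def NoCommon {PV Ag : Type} : Form PV Ag → Prop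
  | .atom _ => True
  | .bot => True
  | .imp φ ψ => NoCommon φ ∧ NoCommon ψ
  | .know _ φ => NoCommon φ
  | .common _ _ => False
  | .next φ => NoCommon φ

/-- Restriction of a set of words to words of length at most `n`. -/
def restr {Ag : Type} (X : Set (List Ag)) (n : ℕ) : Set (List Ag) :=
  {w ∈ X | w.length ≤ n}

end KOS

namespace KOS
namespace Consensus

/-- The two agents of the consensus example. -/
inductive Agt | a | b
  deriving DecidableEq

instance : Fintype Agt := ⟨{Agt.a, Agt.b}, fun x => by cases x <;> simp⟩

/-- Actions: `α` (choose the minimum, leading to `v2`) and `β` (maximum, to `v3`). -/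
inductive Act | α | β
  deriving DecidableEq

instance : Fintype Act := ⟨{Act.α, Act.β}, fun x => by cases x <;> simp⟩

/-- Positions of `G₃`. -/
inductive Pos | v1 | v2 | v3
  deriving DecidableEq

instance : Fintype Pos := ⟨{Pos.v1, Pos.v2, Pos.v3}, fun x => by cases x <;> simp⟩

/-- Atomic propositions: `p` (output 0 chosen) and `q` (output 1 chosen). -/
inductive PVar | p | q
  deriving DecidableEq

instance : Fintype PVar := ⟨{PVar.p, PVar.q}, fun x => by cases x <;> simp⟩

/-- Agent `b`'s observation relation on positions: `b` cannot distinguish `v2`, `v3`. -/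
def rb (x y : Pos) : Prop :=
  x = y ∨ (x = Pos.v2 ∧ y = Pos.v3) ∨ (x = Pos.v3 ∧ y = Pos.v2)

instance : DecidableRel rb := fun x y => by unfold rb; infer_instance

lemma rb_refl : ∀ x, rb x x := by decide
lemma rb_symm : ∀ x y, rb x y → rb y x := by decide
lemma rb_trans : ∀ x y z, rb x y → rb y z → rb x z := by decide

/-- The consensus game structure `G₃`. -/
def G3 : CGS PVar Agt Act Pos where
  E := fun v jact =>
    match v, jact Agt.a with
    | Pos.v1, Act.α => Pos.v2
    | Pos.v1, Act.β => Pos.v3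
    | v, _ => v
  label := fun v =>
    match v with
    | Pos.v1 => ∅
    | Pos.v2 => {PVar.p}
    | Pos.v3 => {PVar.q}
  simV := fun ag x y =>
    match ag with
    | Agt.a => x = y
    | Agt.b => rb x y
  simAc := fun ag x y =>
    match ag with
    | Agt.a => x = y
    | Agt.b => True
  eqvV := fun ag =>
    match ag with
    | Agt.a => ⟨fun _ => rfl, Eq.symm, Eq.trans⟩
    | Agt.b => ⟨rb_refl, fun {x y} h => rb_symm x y h,
        fun {x y z} h h' => rb_trans x y z h h'⟩
  eqvAc := fun ag =>
    match ag with
    | Agt.a => ⟨fun _ => rfl, Eq.symm, Eq.trans⟩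
    | Agt.b => ⟨fun _ => trivial, fun _ => trivial, fun _ _ => trivial⟩

/-- Agent `a`'s strategy is common knowledge in `I`: `wa ∈ I` for every nonempty
alternating word `w` over the agents (such that `wa` is a legal word). -/
def CKa (I : Set (List Agt)) : Prop :=
  ∀ w : List Agt, w ≠ [] → (w ++ [Agt.a]).Chain' (· ≠ ·) → (w ++ [Agt.a]) ∈ I

/-- The history `ρ = v₁ α v₂` generated by an assignment choosing `α` at `v₁`. -/
def ρ0 (χ : Assignment Agt Act Pos) : Hist Agt Act Pos :=
  Hist.step (Hist.init Pos.v1) (fun c => χ c (Hist.init Pos.v1)) Pos.v2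

end Consensus
end KOS

namespace KOS
namespace Consensus

/-- The inductive invariant. -/
def Inv (Z : State Agt Act Pos) : Prop :=
  CKa Z.I ∧ Z.χ Agt.a (Hist.init Pos.v1) = Act.α ∧
    ∃ γ, Z.ρ = Hist.step (Hist.init Pos.v1) γ Pos.v2

lemma a_mem_Ia {I : Set (List Agt)} (h : CKa I) (x : Agt) : Agt.a ∈ Ia I x := by
  by_cases hx : x = Agt.a
  · exact Or.inr (by simp [hx])
  · left
    exact h [x] (by simp) (by simp [List.Chain', List.isChain_cons_cons, hx])

lemma CKa_shift {I J : Set (List Agt)} (h : CKa I) (x : Agt)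
    (hsub : shift I x ⊆ J) : CKa J := by
  intro w hw hch
  by_cases hx : w.head? = some x
  · -- w = x :: w', use second branch of shift
    apply hsub
    right
    refine ⟨h w hw hch, ?_⟩
    cases w with
    | nil => simp at hw
    | cons y t => exact ⟨t ++ [Agt.a], by simp at hx; simp [hx]⟩
  · -- x :: (w ++ [a]) is a chain, use first branch
    apply hsub
    left
    constructor
    · refine ⟨?_, hch⟩
      cases w with
      | nil => simp at hw
      | cons y t => simp
    · have : (x :: (w ++ [Agt.a])).Chain' (· ≠ ·) := by
        unfold List.Chain'; rw [List.isChain_cons]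
        refine ⟨?_, hch⟩
        intro y hy
        cases w with
        | nil => simp at hw
        | cons z t =>
          simp at hy
          subst hy
          intro hxy
          exact hx (by simp [hxy])
      have := h (x :: w) (by simp) (by simpa using this)
      simpa using this

lemma inv_step {Z Z' : State Agt Act Pos} (hZ : Inv Z) {x : Agt}
    (hacc : G3.Acc x Z Z') : Inv Z' := by
  obtain ⟨hCK, hχa, γ, hρ⟩ := hZ
  obtain ⟨_, hIP', _, hV', hsim, hsub, hsimH, hcons, hcons'⟩ := hacc
  have hCK' : CKa Z'.I := CKa_shift hCK x hsub
  have hχ' : Z'.χ Agt.a (Hist.init Pos.v1) = Act.α := by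
    rw [← hsim Agt.a (a_mem_Ia hCK x)]; exact hχa
  refine ⟨hCK', hχ', ?_⟩
  -- analyze Z'.ρ
  rw [hρ] at hsimH
  rcases hρ' : Z'.ρ with v' | ⟨ρ'', γ', v'⟩
  · rw [hρ'] at hsimH; exact absurd hsimH (by simp [CGS.simH])
  · rw [hρ'] at hsimH
    obtain ⟨hsimH0, _, _⟩ := hsimH
    -- ρ'' must be init v1
    rcases ρ'' with v0 | ⟨_, _, _⟩
    case step => exact absurd hsimH0 (by simp [CGS.simH])
    have hv0 : v0 = Pos.v1 := by
      cases x <;> simp [CGS.simH, G3] at hsimH0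
      · exact hsimH0.symm
      · rcases hsimH0 with h | h | h
        · exact h.symm
        · exact absurd h.1 (by simp)
        · exact absurd h.1 (by simp)
    subst hv0
    -- validity: v' = E v1 γ'
    rw [hρ'] at hV'
    obtain ⟨_, hE⟩ := hV'
    -- consistency: γ' a = Z'.χ a (init v1) = α
    have hconsZ' := hcons'
    unfold State.aCons at hconsZ'
    rw [hρ'] at hconsZ'
    obtain ⟨_, hγ'⟩ := hconsZ'
    have hγa : γ' Agt.a = Act.α := by
      rw [hγ' Agt.a (a_mem_Ia hCK' x)]; exact hχ'
    have : v' = Pos.v2 := by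
      rw [hE]; simp [Hist.last, G3, hγa]
    exact ⟨γ', by rw [this]⟩

lemma inv_trans {Z Z' : State Agt Act Pos}
    (h : Relation.TransGen (fun X Y => ∃ x ∈ (Set.univ : Set Agt), G3.Acc x X Y) Z Z')
    (hZ : Inv Z) : Inv Z' := by
  induction h with
  | single h => obtain ⟨x, _, hx⟩ := h; exact inv_step hZ hx
  | tail _ h ih => obtain ⟨x, _, hx⟩ := h; exact inv_step ih hx

end Consensus
end KOS

open KOS KOS.Consensus in
/-- in `G₃`, if agent `a`'s strategy is common knowledge in `I`, then
`G₃, (χ, I, ρ) ⊨ C_G p`; moreover, common knowledge of `a`'s strategy is preserved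
along every accessibility step (by agents of `G = {a,b}`) from `(χ, I, ρ)`. -/
theorem stmt14 (I : Set (List Agt)) (hI : InfPersp I)
    (χ : Assignment Agt Act Pos)
    (hχ : χ Agt.a (Hist.init Pos.v1) = Act.α)
    (hCK : CKa I) :
    G3.Truth (.common Set.univ (.atom PVar.p)) ⟨χ, I, ρ0 χ⟩ ∧
    (∀ Z' : State Agt Act Pos,
      Relation.TransGen (fun X Y => ∃ x ∈ (Set.univ : Set Agt), G3.Acc x X Y)
        ⟨χ, I, ρ0 χ⟩ Z' → CKa Z'.I) := by
  have hInv0 : Inv ⟨χ, I, ρ0 χ⟩ :=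
    ⟨hCK, hχ, fun c => χ c (Hist.init Pos.v1), rfl⟩
  constructor
  · intro Z' hZ'
    obtain ⟨_, _, γ, hρ⟩ := inv_trans hZ' hInv0
    show PVar.p ∈ G3.label Z'.ρ.last
    rw [hρ]; simp [Hist.last, G3]
  · intro Z' hZ'
    exact (inv_trans hZ' hInv0).1
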